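/- With the notation of the previous lemma, let τ⁰_φ = inf{ s ≥ 0 : ρ_s + φ(s) ≥ 0 }. For any sequence h_n ↓ 0 with h_n ∈ (0, −φ(0)), one has τ^{−h_n}_φ → τ⁰_φ almost surely; moreover, for any deterministic S ∈ (0,∞), τ^{−h_n}_φ · 1{τ^{−h_n}_φ < S} → τ⁰_φ · 1{τ⁰_φ < S} almost surely. -/

import Mathlib

open MeasureTheory ProbabilityTheory Filter Set

/-- A standard one-dimensional Brownian motion started at `0` under `P`. -/
structure IsBM {Ω : Type*} [MeasurableSpace Ω] (P : Measure Ω) (B : ℝ → Ω → ℝ) : Prop where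
  init : ∀ ω, B 0 ω = 0
  cont : ∀ ω, Continuous fun t => B t ω
  meas : ∀ t, Measurable (B t)
  incr : ∀ s t : ℝ, 0 ≤ s → s ≤ t →
    Measure.map (fun ω => B t ω - B s ω) P = gaussianReal 0 (Real.toNNReal (t - s))
  indep : ∀ s t u v : ℝ, 0 ≤ s → s ≤ t → t ≤ u → u ≤ v →
    IndepFun (fun ω => B t ω - B s ω) (fun ω => B v ω - B u ω) P

/-- A standard three-dimensional Brownian motion started at the origin under `P`. -/
structure IsBM3 {Ω : Type*} [MeasurableSpace Ω] (P : Measure Ω)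
    (B : ℝ → Ω → EuclideanSpace ℝ (Fin 3)) : Prop where
  coord : ∀ i : Fin 3, IsBM P (fun t ω => B t ω i)
  indepCoord : iIndepFun
    (fun (i : Fin 3) (ω : Ω) => fun t : ℝ => B t ω i) P

/-! ### Deterministic lemmas about hitting times -/

lemma det_tendsto (f : ℝ → ℝ) (hf : Continuous f)
    (hne : ({s | 0 ≤ s ∧ 0 ≤ f s}).Nonempty)
    (hn : ℕ → ℝ) (hpos : ∀ n, 0 < hn n) (hanti : Antitone hn)
    (hlim : Tendsto hn atTop (nhds 0)) :
    Tendsto (fun n => sInf {s | 0 ≤ s ∧ -(hn n) ≤ f s}) atTop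
      (nhds (sInf {s | 0 ≤ s ∧ 0 ≤ f s})) := by
  set A0 : Set ℝ := {s | 0 ≤ s ∧ 0 ≤ f s} with hA0
  set A : ℕ → Set ℝ := fun n => {s | 0 ≤ s ∧ -(hn n) ≤ f s} with hA
  have hclosed : ∀ n, IsClosed (A n) := fun n =>
    (isClosed_Ici.preimage continuous_id).inter (isClosed_le continuous_const hf)
  have hbdd : ∀ n, BddBelow (A n) := fun n => ⟨0, fun s hs => hs.1⟩
  have hbdd0 : BddBelow A0 := ⟨0, fun s hs => hs.1⟩
  have hsub0 : ∀ n, A0 ⊆ A n := fun n s hs =>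
    ⟨hs.1, le_trans (by linarith [hpos n]) hs.2⟩
  have hnem : ∀ n, (A n).Nonempty := fun n => hne.mono (hsub0 n)
  set T : ℕ → ℝ := fun n => sInf (A n) with hT
  have hmemA : ∀ n, T n ∈ A n := fun n => (hclosed n).csInf_mem (hnem n) (hbdd n)
  have hTle : ∀ n, T n ≤ sInf A0 := fun n => csInf_le_csInf (hbdd n) hne (hsub0 n)
  have hmono : Monotone T := by
    intro m n hmn
    refine csInf_le_csInf (hbdd m) (hnem n) ?_
    intro s hs
    exact ⟨hs.1, le_trans (neg_le_neg (hanti hmn)) hs.2⟩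
  have hbddA : BddAbove (range T) := ⟨sInf A0, by rintro x ⟨n, rfl⟩; exact hTle n⟩
  have htend : Tendsto T atTop (nhds (⨆ n, T n)) := tendsto_atTop_ciSup hmono hbddA
  have hTsup_le : (⨆ n, T n) ≤ sInf A0 := ciSup_le hTle
  have hmem_sup : (⨆ n, T n) ∈ A0 := by
    constructor
    · exact le_ciSup hbddA 0 |>.trans' (hmemA 0).1
    · have h1 : Tendsto (fun n => f (T n)) atTop (nhds (f (⨆ n, T n))) :=
        (hf.tendsto _).comp htend
      have h2 : Tendsto (fun n => -(hn n)) atTop (nhds 0) := by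
        simpa using hlim.neg
      exact le_of_tendsto_of_tendsto' h2 h1 fun n => (hmemA n).2
  have : (⨆ n, T n) = sInf A0 := le_antisymm hTsup_le (csInf_le hbdd0 hmem_sup)
  rwa [this] at htend

lemma det_hit (f : ℝ → ℝ) (hf : Continuous f) (hf0 : f 0 < 0)
    (hne : ({s | 0 ≤ s ∧ 0 ≤ f s}).Nonempty) :
    f (sInf {s | 0 ≤ s ∧ 0 ≤ f s}) = 0 := by
  set A0 : Set ℝ := {s | 0 ≤ s ∧ 0 ≤ f s} with hA0
  have hclosed : IsClosed A0 :=
    (isClosed_Ici.preimage continuous_id).inter (isClosed_le continuous_const hf)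
  have hbdd0 : BddBelow A0 := ⟨0, fun s hs => hs.1⟩
  set T0 := sInf A0 with hT0
  have hmem : T0 ∈ A0 := hclosed.csInf_mem hne hbdd0
  have hposT : 0 < T0 := by
    rcases lt_or_eq_of_le hmem.1 with h | h
    · exact h
    · exact absurd hmem.2 (by rw [← h]; exact not_le.mpr hf0)
  have hlt : ∀ s ∈ Ico 0 T0, f s ≤ 0 := by
    intro s hs
    by_contra hcon
    exact absurd (csInf_le hbdd0 ⟨hs.1, (not_le.mp hcon).le⟩) (not_le.mpr hs.2)
  have hne2 : T0 ∈ closure (Ico 0 T0) := by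
    rw [closure_Ico hposT.ne]; exact ⟨hposT.le, le_refl _⟩
  have hnb : (nhdsWithin T0 (Ico 0 T0)).NeBot := mem_closure_iff_nhdsWithin_neBot.mp hne2
  have hle : f T0 ≤ 0 := by
    refine le_of_tendsto (hf.continuousWithinAt (s := Ico 0 T0)) ?_
    exact eventually_nhdsWithin_of_forall hlt
  exact le_antisymm hle hmem.2

/-! ### Gaussian facts -/

lemma gauss_Ici_pos (c : ℝ) : 0 < (gaussianReal 0 1) (Ici c) := by
  rw [gaussianReal_of_var_ne_zero 0 one_ne_zero, withDensity_apply _ measurableSet_Ici]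
  rw [lintegral_pos_iff_support (measurable_gaussianPDF 0 1)]
  have hsupp : Function.support (gaussianPDF 0 1) = univ := by
    ext x; simp [Function.mem_support, (gaussianPDF_pos 0 one_ne_zero x).ne']
  rw [Measure.restrict_apply (measurableSet_support (measurable_gaussianPDF 0 1)), hsupp,
    univ_inter]
  simp [Real.volume_Ici]

lemma gauss_singleton (v : NNReal) (hv : v ≠ 0) (x : ℝ) : (gaussianReal 0 v) {x} = 0 := by
  rw [gaussianReal_of_var_ne_zero 0 hv, withDensity_apply _ (measurableSet_singleton x),
    setLIntegral_measure_zero _ _ (measure_singleton x)]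

lemma sq_eq_null (v : NNReal) (hv : v ≠ 0) (a : ℝ) :
    (gaussianReal 0 v) {x : ℝ | x ^ 2 = a} = 0 := by
  refine measure_mono_null (t := {Real.sqrt a, -Real.sqrt a}) ?_ ?_
  · intro x hx
    have hx' : x ^ 2 = a := hx
    have habs : Real.sqrt a = |x| := by rw [← hx', Real.sqrt_sq_eq_abs]
    rcases abs_choice x with h | h
    · left; rw [habs, h]
    · right; rw [habs, h, neg_neg]; exact Set.mem_singleton _
  · refine measure_union_null (gauss_singleton v hv _) (gauss_singleton v hv _)

/-! ### A.s. existence of a large increment (second-moment method) -/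

lemma exists_big_incr {Ω : Type*} [MeasurableSpace Ω] (P : Measure Ω) [IsProbabilityMeasure P]
    (b : ℝ → Ω → ℝ) (hb : IsBM P b) (M : ℝ) :
    ∀ᵐ ω ∂P, ∃ n : ℕ, 2 * M ≤ b (n + 1) ω - b n ω := by
  set X : ℕ → Ω → ℝ := fun n ω => b (n + 1) ω - b n ω with hX
  have hXmeas : ∀ n, Measurable (X n) := fun n => (hb.meas _).sub (hb.meas _)
  have hmap : ∀ n : ℕ, Measure.map (X n) P = gaussianReal 0 1 := by
    intro n
    have h := hb.incr n (n + 1) (Nat.cast_nonneg n) (by linarith)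
    have h1 : ((n : ℝ) + 1) - (n : ℝ) = 1 := by ring
    rw [h1, Real.toNNReal_one] at h
    exact h
  set p : ℝ := ((gaussianReal 0 1) (Ici (2 * M))).toReal with hp
  have hp0 : 0 < p := ENNReal.toReal_pos (gauss_Ici_pos _).ne' (measure_ne_top _ _)
  set A : ℕ → Set Ω := fun n => X n ⁻¹' Ici (2 * M) with hA
  have hAmeas : ∀ n, MeasurableSet (A n) := fun n => hXmeas n measurableSet_Ici
  have hPA : ∀ n, P (A n) = (gaussianReal 0 1) (Ici (2 * M)) := fun n => by
    rw [hA]; rw [← hmap n, Measure.map_apply (hXmeas n) measurableSet_Ici]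
  set Y : ℕ → Ω → ℝ := fun n => (A n).indicator fun _ => (1 : ℝ) with hY
  have hYmem : ∀ n, MemLp (Y n) 2 P := fun n =>
    memLp_indicator_const 2 (hAmeas n) 1 (Or.inr (measure_ne_top P _))
  have hYint : ∀ n, ∫ ω, Y n ω ∂P = p := by
    intro n
    rw [hY]
    simp only [integral_indicator_const (1 : ℝ) (hAmeas n), smul_eq_mul, mul_one, measureReal_def, hPA n, hp]
  have hYsq : ∀ n, (Y n) ^ 2 = Y n := by
    intro n
    funext ω
    simp only [Pi.pow_apply, hY, Set.indicator]
    split_ifs <;> norm_num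
  have hVar : ∀ n, variance (Y n) P = p - p ^ 2 := by
    intro n
    rw [variance_eq_sub (hYmem n), hYsq n, hYint n]
  have hg : Measurable ((Ici (2 * M)).indicator fun _ => (1 : ℝ)) :=
    measurable_const.indicator measurableSet_Ici
  have hYcomp : ∀ n, Y n = ((Ici (2 * M)).indicator fun _ => (1 : ℝ)) ∘ X n := by
    intro n
    funext ω
    by_cases h : X n ω ∈ Ici (2 * M) <;>
      simp [hY, hA, Set.indicator, h, Set.mem_preimage]
  have hYindep : ∀ m n : ℕ, m ≠ n → IndepFun (Y m) (Y n) P := by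
    have key : ∀ m n : ℕ, m < n → IndepFun (X m) (X n) P := by
      intro m n h
      have h1 : ((m : ℝ) + 1) ≤ (n : ℝ) := by exact_mod_cast Nat.succ_le_of_lt h
      exact hb.indep m (m + 1) n (n + 1) (Nat.cast_nonneg m) (by linarith) h1 (by linarith)
    intro m n hmn
    rcases lt_or_gt_of_ne hmn with h | h
    · rw [hYcomp m, hYcomp n]; exact (key m n h).comp hg hg
    · rw [hYcomp m, hYcomp n]; exact ((key n m h).comp hg hg).symm
  have hSmem : ∀ N : ℕ, MemLp (∑ n ∈ Finset.range N, Y n) 2 P := fun N =>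
    memLp_finset_sum' _ fun i _ => hYmem i
  have hSE : ∀ N : ℕ, (∫ ω, (∑ n ∈ Finset.range N, Y n) ω ∂P) = N * p := by
    intro N
    simp only [Finset.sum_apply]
    rw [integral_finset_sum _ fun i _ => (hYmem i).integrable one_le_two]
    simp [hYint, Finset.sum_const, Finset.card_range, nsmul_eq_mul]
  have hSVar : ∀ N : ℕ, variance (∑ n ∈ Finset.range N, Y n) P = N * (p - p ^ 2) := by
    intro N
    rw [IndepFun.variance_sum (fun i _ => hYmem i)
      (fun i _ j _ hij => hYindep i j hij)]
    simp [hVar, Finset.sum_const, Finset.card_range, nsmul_eq_mul, mul_sub]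
  set G : Set Ω := {ω | ∀ n, X n ω < 2 * M} with hG
  have hGbound : ∀ N : ℕ, 1 ≤ N → P G ≤ ENNReal.ofReal (1 / (N * p)) := by
    intro N hN
    have hNp : 0 < (N : ℝ) * p := by
      have : (1 : ℝ) ≤ N := by exact_mod_cast hN
      nlinarith
    have hcheb := meas_ge_le_variance_div_sq (μ := P) (hSmem N) hNp
    have hsub : G ⊆ {ω | (N : ℝ) * p ≤
        |(∑ n ∈ Finset.range N, Y n) ω - P[∑ n ∈ Finset.range N, Y n]|} := by
      intro ω hω
      have hzero : (∑ n ∈ Finset.range N, Y n) ω = 0 := by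
        simp only [hY, Finset.sum_apply]
        refine Finset.sum_eq_zero fun n _ => ?_
        have hnm : ω ∉ A n := fun hmem => absurd (hω n) (not_lt.mpr hmem)
        simp [Set.indicator_of_notMem hnm]
      have hEe : P[∑ n ∈ Finset.range N, Y n] = N * p := hSE N
      simp only [Set.mem_setOf_eq, hzero, hEe, zero_sub, abs_neg]
      rw [abs_of_nonneg hNp.le]
    refine le_trans (measure_mono hsub) (le_trans hcheb ?_)
    rw [hSVar N]
    refine ENNReal.ofReal_le_ofReal ?_
    have h1 : (N : ℝ) * (p - p ^ 2) ≤ N * p := by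
      nlinarith [Nat.cast_nonneg (α := ℝ) N, sq_nonneg p]
    calc (N : ℝ) * (p - p ^ 2) / (N * p) ^ 2 ≤ (N * p) / (N * p) ^ 2 :=
          (div_le_div_iff_of_pos_right (by positivity)).mpr h1
      _ = 1 / (N * p) := by
          rw [pow_two]
          field_simp
  have htend : Tendsto (fun N : ℕ => ENNReal.ofReal (1 / (N * p))) atTop (nhds 0) := by
    have h1 : Tendsto (fun N : ℕ => (N : ℝ) * p) atTop atTop :=
      Tendsto.atTop_mul_const hp0 tendsto_natCast_atTop_atTop
    have h2 : Tendsto (fun N : ℕ => ((N : ℝ) * p)⁻¹) atTop (nhds 0) :=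
      tendsto_inv_atTop_zero.comp h1
    have h3 := ENNReal.tendsto_ofReal h2
    simpa [one_div] using h3
  have hG0 : P G = 0 := by
    have hle : P G ≤ 0 := by
      refine ge_of_tendsto htend ?_
      filter_upwards [eventually_ge_atTop 1] with N hN using hGbound N hN
    exact le_antisymm hle (by simp)
  rw [ae_iff]
  convert hG0 using 2
  ext ω
  simp only [hG, hX, Set.mem_setOf_eq, not_exists, not_le]

/-! ### No atom for the norm at a fixed time -/

lemma norm_BS_ne_const {Ω : Type*} [MeasurableSpace Ω] (P : Measure Ω) [IsProbabilityMeasure P]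
    (B : ℝ → Ω → EuclideanSpace ℝ (Fin 3)) (hB : IsBM3 P B) (S : ℝ) (hS : 0 < S) (c : ℝ) :
    ∀ᵐ ω ∂P, ‖B S ω‖ ≠ c := by
  set X : Fin 3 → Ω → ℝ := fun i ω => B S ω i with hXdef
  have hXmeas : ∀ i, Measurable (X i) := fun i => (hB.coord i).meas S
  have hiX : iIndepFun X P :=
    hB.indepCoord.comp (fun _ p => p S) (fun _ => measurable_pi_apply S)
  have hv : Real.toNNReal S ≠ 0 := by
    simp only [ne_eq, Real.toNNReal_eq_zero, not_le]; exact hS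
  have hmapX : ∀ i, Measure.map (X i) P = gaussianReal 0 (Real.toNNReal S) := by
    intro i
    have h := (hB.coord i).incr 0 S le_rfl hS.le
    have heq : (fun ω => B S ω i - B 0 ω i) = X i := by
      funext ω; rw [(hB.coord i).init ω]; ring
    rw [heq, sub_zero] at h
    exact h
  set Y : Ω → ℝ × ℝ := fun ω => (X 1 ω, X 2 ω) with hYdef
  have hYmeas : Measurable Y := (hXmeas 1).prodMk (hXmeas 2)
  have hpair : IndepFun Y (X 0) P :=
    hiX.indepFun_prodMk hXmeas 1 2 0 (by decide) (by decide)
  have hmapPair : Measure.map (fun ω => (Y ω, X 0 ω)) P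
      = (Measure.map Y P).prod (Measure.map (X 0) P) :=
    (indepFun_iff_map_prod_eq_prod_map_map hYmeas.aemeasurable
      (hXmeas 0).aemeasurable).mp hpair
  set T : Set ((ℝ × ℝ) × ℝ) := {q | q.2 ^ 2 = c ^ 2 - (q.1.1 ^ 2 + q.1.2 ^ 2)} with hTdef
  have hTmeas : MeasurableSet T := by
    exact measurableSet_eq_fun (by fun_prop) (by fun_prop)
  have hsub : {ω | ‖B S ω‖ = c} ⊆ (fun ω => (Y ω, X 0 ω)) ⁻¹' T := by
    intro ω h
    have h' : ‖B S ω‖ = c := h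
    have hnorm : ‖B S ω‖ ^ 2 = ∑ i, ‖B S ω i‖ ^ 2 := by
      rw [EuclideanSpace.norm_eq, Real.sq_sqrt (by positivity)]
    have h3 : (X 0 ω) ^ 2 + ((X 1 ω) ^ 2 + (X 2 ω) ^ 2) = c ^ 2 := by
      rw [← h', hnorm, Fin.sum_univ_three]
      simp only [Real.norm_eq_abs, sq_abs, hXdef]
      ring
    show (X 0 ω) ^ 2 = c ^ 2 - ((X 1 ω) ^ 2 + (X 2 ω) ^ 2)
    linarith
  have hzero : P ((fun ω => (Y ω, X 0 ω)) ⁻¹' T) = 0 := by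
    rw [← Measure.map_apply (hYmeas.prodMk (hXmeas 0)) hTmeas, hmapPair,
      Measure.prod_apply hTmeas]
    have hinner : ∀ y : ℝ × ℝ, (Measure.map (X 0) P) (Prod.mk y ⁻¹' T) = 0 := by
      intro y
      have : Prod.mk y ⁻¹' T = {x : ℝ | x ^ 2 = c ^ 2 - (y.1 ^ 2 + y.2 ^ 2)} := rfl
      rw [this, hmapX 0, sq_eq_null _ hv]
    simp only [hinner, lintegral_zero]
  have := measure_mono_null hsub hzero
  rw [ae_iff]
  convert this using 2
  ext ω
  simp

/-! ### A.s. the process `‖B s‖ + φ s` reaches `[0, ∞)` -/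

lemma hit_nonneg {Ω : Type*} [MeasurableSpace Ω] (P : Measure Ω) [IsProbabilityMeasure P]
    (B : ℝ → Ω → EuclideanSpace ℝ (Fin 3)) (hB : IsBM3 P B)
    (φ : ℝ → ℝ) (hφbd : BddBelow (range φ)) :
    ∀ᵐ ω ∂P, ({s : ℝ | 0 ≤ s ∧ 0 ≤ ‖B s ω‖ + φ s}).Nonempty := by
  obtain ⟨bd, hbd⟩ := hφbd
  set M : ℝ := |bd| + 1 with hM
  filter_upwards [exists_big_incr P (fun t ω => B t ω 0) (hB.coord 0) M] with ω hω
  obtain ⟨n, hn2⟩ := hω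
  have hcoord : ∀ t : ℝ, |B t ω 0| ≤ ‖B t ω‖ := by
    intro t
    rw [EuclideanSpace.norm_eq]
    calc |B t ω 0| = Real.sqrt (‖B t ω 0‖ ^ 2) := by
          rw [Real.sqrt_sq_eq_abs, Real.norm_eq_abs, abs_abs]
      _ ≤ Real.sqrt (∑ i, ‖B t ω i‖ ^ 2) := by
          apply Real.sqrt_le_sqrt
          exact Finset.single_le_sum (f := fun i : Fin 3 => ‖B t ω i‖ ^ 2) (fun i _ => by positivity) (Finset.mem_univ (0 : Fin 3))
  have hφge : ∀ t : ℝ, -M + 1 ≤ φ t := by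
    intro t
    have := hbd (mem_range_self t)
    have := neg_abs_le bd
    simp only [hM]
    linarith
  have hsum : 2 * M ≤ ‖B ((n : ℝ) + 1) ω‖ + ‖B (n : ℝ) ω‖ := by
    have h1 := hcoord ((n : ℝ) + 1)
    have h2 := hcoord (n : ℝ)
    have h3 : B ((n : ℝ) + 1) ω 0 - B (n : ℝ) ω 0 ≤ |B ((n : ℝ) + 1) ω 0| + |B (n : ℝ) ω 0| := by
      have := abs_sub_abs_le_abs_sub (B ((n : ℝ) + 1) ω 0) (B (n : ℝ) ω 0)
      have := le_abs_self (B ((n : ℝ) + 1) ω 0)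
      have := neg_abs_le (B (n : ℝ) ω 0)
      linarith [le_abs_self (B ((n : ℝ) + 1) ω 0), neg_abs_le (B (n : ℝ) ω 0)]
    linarith
  by_cases h : M ≤ ‖B ((n : ℝ) + 1) ω‖
  · refine ⟨(n : ℝ) + 1, ⟨by positivity, ?_⟩⟩
    have := hφge ((n : ℝ) + 1)
    linarith
  · refine ⟨(n : ℝ), ⟨Nat.cast_nonneg n, ?_⟩⟩
    have := hφge (n : ℝ)
    push_neg at h
    linarith

/-! ### Main theorem -/

/-- Lemma 3.2: with `τ^{-h}_φ = inf{s ≥ 0 : ρ_s + φ s ≥ -h}` and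
`τ⁰_φ = inf{s ≥ 0 : ρ_s + φ s ≥ 0}`, for any sequence `h_n ↓ 0` in `(0, -φ 0)` one has
`τ^{-h_n}_φ → τ⁰_φ` a.s., and for any deterministic `S ∈ (0,∞)`,
`τ^{-h_n}_φ 1{τ^{-h_n}_φ < S} → τ⁰_φ 1{τ⁰_φ < S}` a.s. -/
theorem stmt4 {Ω : Type*} [mΩ : MeasurableSpace Ω] (P : Measure Ω) [IsProbabilityMeasure P]
    (B : ℝ → Ω → EuclideanSpace ℝ (Fin 3)) (hB : IsBM3 P B)
    (φ : ℝ → ℝ) (hφc : Continuous φ) (hφbd : BddBelow (range φ)) (hφ0 : φ 0 < 0)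
    (hn : ℕ → ℝ) (hmem : ∀ n, hn n ∈ Ioo 0 (-φ 0)) (hanti : Antitone hn)
    (hlim : Tendsto hn atTop (nhds 0)) :
    (∀ᵐ ω ∂P,
      Tendsto (fun n => sInf {s | 0 ≤ s ∧ -(hn n) ≤ ‖B s ω‖ + φ s}) atTop
        (nhds (sInf {s | 0 ≤ s ∧ 0 ≤ ‖B s ω‖ + φ s}))) ∧
    ∀ S : ℝ, 0 < S → ∀ᵐ ω ∂P,
      Tendsto
        (fun n =>
          if sInf {s | 0 ≤ s ∧ -(hn n) ≤ ‖B s ω‖ + φ s} < S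
          then sInf {s | 0 ≤ s ∧ -(hn n) ≤ ‖B s ω‖ + φ s} else 0) atTop
        (nhds
          (if sInf {s | 0 ≤ s ∧ 0 ≤ ‖B s ω‖ + φ s} < S
           then sInf {s | 0 ≤ s ∧ 0 ≤ ‖B s ω‖ + φ s} else 0)) := by
  have hfc : ∀ ω, Continuous fun s => ‖B s ω‖ + φ s := by
    intro ω
    have h1 : Continuous fun s => (fun i => B s ω i : Fin 3 → ℝ) :=
      continuous_pi fun i => (hB.coord i).cont ω
    have h2 : Continuous fun s => B s ω :=
      (EuclideanSpace.equiv (Fin 3) ℝ).symm.continuous.comp h1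
    exact (continuous_norm.comp h2).add hφc
  constructor
  · filter_upwards [hit_nonneg P B hB φ hφbd] with ω hne
    exact det_tendsto _ (hfc ω) hne hn (fun n => (hmem n).1) hanti hlim
  · intro S hS
    filter_upwards [hit_nonneg P B hB φ hφbd, norm_BS_ne_const P B hB S hS (-φ S)]
      with ω hne hne2
    have hf0 : ‖B (0 : ℝ) ω‖ + φ 0 < 0 := by
      have hB0 : B (0 : ℝ) ω = 0 := PiLp.ext fun i => (hB.coord i).init ω
      rw [hB0, norm_zero, zero_add]
      exact hφ0
    have htd := det_tendsto _ (hfc ω) hne hn (fun n => (hmem n).1) hanti hlim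
    have hT0 : sInf {s | 0 ≤ s ∧ 0 ≤ ‖B s ω‖ + φ s} ≠ S := by
      intro hEq
      have hhit := det_hit _ (hfc ω) hf0 hne
      rw [hEq] at hhit
      exact hne2 (by linarith)
    rcases lt_or_gt_of_ne hT0 with hlt | hgt
    · rw [if_pos hlt]
      refine Tendsto.congr' ?_ htd
      filter_upwards [htd.eventually_lt_const hlt] with n h
      rw [if_pos h]
    · rw [if_neg (not_lt.mpr hgt.le)]
      refine Tendsto.congr' ?_ tendsto_const_nhds
      filter_upwards [htd.eventually_const_lt hgt] with n h
      rw [if_neg (not_lt.mpr h.le)]
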